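/- arXiv:0907.1166 — 4 statements merged into one kernel-verified Lean document; each statement's English description precedes it below -/
import Mathlib

section
/- For every graph G that is cubic with girth at least g, and every set S of vertices, the number of connected components of G − S that have odd order and are joined to S by exactly one edge is at most n/g, where n is the number of vertices of G. -/
/-!
A component of `G - S` joined to `S` by at most two edges cannot be a tree: a tree on `k`
vertices has degree sum `2k - 2`, while its vertices have degree sum at least `3k` in `G`, so at
least `k + 2 ≥ 3` edges leave it. Hence each such component contains a cycle and therefore has at
least `g` vertices; since components are disjoint, there are at most `n / g` of them.
-/

open Finset

namespace SimpleGraph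

variable {V W : Type*}

lemma egirth_le_card_of_not_isAcyclic [Finite V] {G : SimpleGraph V} (h : ¬G.IsAcyclic) :
    G.egirth ≤ Nat.card V := by
  have := Fintype.ofFinite V
  obtain ⟨a, w, hw, hlen⟩ := exists_egirth_eq_length.mpr h
  have hlt := hw.isPath_tail.length_lt
  rw [Walk.length_tail] at hlt
  have := hw.three_le_length
  rw [hlen, Nat.card_eq_fintype_card, Nat.cast_le]
  omega

lemma IsTree.sum_degrees_add_two [Fintype W] {H : SimpleGraph W} [DecidableRel H.Adj]
    (h : H.IsTree) : ∑ v, H.degree v + 2 = 2 * Fintype.card W := by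
  rw [sum_degrees_eq_twice_card_edges, ← h.card_edgeFinset]
  ring

lemma ncard_mul_le_card_of_le_card_supp [Finite V] {G : SimpleGraph V}
    {T : Set G.ConnectedComponent} {g : ℕ} (h : ∀ C ∈ T, g ≤ Nat.card C.supp) :
    T.ncard * g ≤ Nat.card V := by
  classical
  have := Fintype.ofFinite V
  calc T.ncard * g = ∑ C ∈ T.toFinset, g := by simp [Set.ncard_eq_toFinset_card']
    _ ≤ ∑ C ∈ T.toFinset, #C.supp.toFinset := by
      gcongr with C hC
      rw [Set.toFinset_card, ← Nat.card_eq_fintype_card]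
      exact h C (Set.mem_toFinset.mp hC)
    _ = #(T.toFinset.biUnion fun C ↦ C.supp.toFinset) := by
      rw [card_biUnion fun C _ D _ hCD ↦ Set.disjoint_toFinset.mpr
        (G.pairwise_disjoint_supp_connectedComponent hCD)]
    _ ≤ Nat.card V := by rw [Nat.card_eq_fintype_card]; exact card_le_univ _

variable [Fintype V] {G : SimpleGraph V} [DecidableRel G.Adj] {S : Set V}

def joiningEdges (G : SimpleGraph V) (S : Set V) (C : (G.induce Sᶜ).ConnectedComponent) :
    Set ((Sᶜ : Set V) × V) :=
  {p | p.2 ∈ S ∧ G.Adj (p.1 : V) p.2 ∧ (G.induce Sᶜ).connectedComponentMk p.1 = C}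

section

open scoped Classical

lemma degree_toSimpleGraph_add_card_filter_mem (C : (G.induce Sᶜ).ConnectedComponent)
    (v : C.supp) :
    C.toSimpleGraph.degree v + #{x ∈ G.neighborFinset v | x ∈ S} = G.degree (v : V) := by
  have hC : C.toSimpleGraph.degree v = (G.induce Sᶜ).degree v := by
    unfold ConnectedComponent.toSimpleGraph
    convert degree_induce_of_neighborSet_subset (G := G.induce Sᶜ) (s := C.supp) (v := v)
      fun _ ↦ C.mem_supp_of_adj_mem_supp v.2
    exact Iff.rfl
  have hS : (G.induce Sᶜ).degree v = #{x ∈ G.neighborFinset v | x ∉ S} := by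
    rw [← card_neighborFinset_eq_degree, ← card_map, map_neighborFinset_induce]
    congr 1
    ext x
    simp
  rw [hC, hS, add_comm, card_filter_add_card_filter_not, card_neighborFinset_eq_degree]

lemma ncard_joiningEdges (C : (G.induce Sᶜ).ConnectedComponent) :
    (joiningEdges G S C).ncard = ∑ v : C.supp, #{x ∈ G.neighborFinset v | x ∈ S} := by
  let f : (Σ _ : C.supp, V) → (Sᶜ : Set V) × V := fun p ↦ (p.1, p.2)
  have hf : f.Injective := by
    rintro ⟨v, x⟩ ⟨w, y⟩ h
    simp only [f, Prod.mk.injEq] at h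
    obtain ⟨h1, rfl⟩ := h
    rw [Subtype.ext h1]
  have himage : joiningEdges G S C =
      f '' (univ.sigma fun v : C.supp ↦ {x ∈ G.neighborFinset v | x ∈ S}) := by
    ext ⟨v, x⟩
    simp [joiningEdges, f, and_comm, and_assoc]
  rw [himage, Set.ncard_image_of_injective _ hf, Set.ncard_coe_finset, card_sigma]

lemma three_le_ncard_joiningEdges_of_isAcyclic (hdeg : ∀ v, 3 ≤ G.degree v)
    {C : (G.induce Sᶜ).ConnectedComponent} (hC : C.toSimpleGraph.IsAcyclic) :
    3 ≤ (joiningEdges G S C).ncard := by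
  have hconn := C.connected_toSimpleGraph
  have htree : ∑ v : C.supp, C.toSimpleGraph.degree v + 2 = 2 * Fintype.card C.supp := by
    convert IsTree.sum_degrees_add_two ⟨hconn, hC⟩ <;> exact Iff.rfl
  have hsplit := sum_congr rfl fun v (_ : v ∈ univ) ↦ degree_toSimpleGraph_add_card_filter_mem C v
  rw [sum_add_distrib, ← ncard_joiningEdges] at hsplit
  have hmin : 3 * Fintype.card C.supp ≤ ∑ v : C.supp, G.degree v := by
    simpa [mul_comm] using card_nsmul_le_sum univ (fun v : C.supp ↦ G.degree v) 3 fun v _ ↦ hdeg v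
  have hpos : 0 < Fintype.card C.supp := by
    have := hconn.nonempty
    exact Fintype.card_pos
  omega

end

lemma le_card_supp_of_ncard_joiningEdges_le_two {g : ℕ} (hdeg : ∀ v, 3 ≤ G.degree v)
    (hgirth : g ≤ G.egirth) {C : (G.induce Sᶜ).ConnectedComponent}
    (hC : (joiningEdges G S C).ncard ≤ 2) : g ≤ Nat.card C.supp := by
  have hcyc : ¬C.toSimpleGraph.IsAcyclic := fun h ↦ by
    have := three_le_ncard_joiningEdges_of_isAcyclic hdeg h
    omega
  have hcopy : C.toSimpleGraph ⊑ G :=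
    ((Embedding.induce Sᶜ).comp (Embedding.induce C.supp)).isContained
  exact_mod_cast hgirth.trans (hcopy.egirth_le.trans (egirth_le_card_of_not_isAcyclic hcyc))

end SimpleGraph

open SimpleGraph

/-- In an `n`-vertex cubic graph `G` of girth at least `g`, for every set `S` of vertices,
the number of connected components of `G − S` that have odd order and are joined to `S` by
exactly one edge is at most `n/g`. -/
theorem stmt1 (V : Type) [Fintype V] (G : SimpleGraph V) [DecidableRel G.Adj]
    (g : ℕ) (hg : 3 ≤ g) (hcubic : ∀ v : V, G.degree v = 3)
    (hgirth : (g : ℕ∞) ≤ G.egirth) (S : Set V) :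
    ({C : (G.induce Sᶜ).ConnectedComponent |
        Odd (Nat.card C.supp) ∧
        {p : (Sᶜ : Set V) × V | p.2 ∈ S ∧ G.Adj (p.1 : V) p.2 ∧
            (G.induce Sᶜ).connectedComponentMk p.1 = C}.ncard = 1}.ncard : ℝ)
      ≤ (Fintype.card V : ℝ) / g := by
  have hcount := ncard_mul_le_card_of_le_card_supp
    (T := {C | Odd (Nat.card C.supp) ∧ (joiningEdges G S C).ncard = 1}) fun C hC ↦
      le_card_supp_of_ncard_joiningEdges_le_two (fun v ↦ (hcubic v).ge) hgirth
        (hC.2.trans_le one_le_two)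
  have hV : Nat.card (Sᶜ : Set V) ≤ Fintype.card V :=
    (Finite.card_subtype_le (· ∈ Sᶜ)).trans_eq Nat.card_eq_fintype_card
  rw [le_div_iff₀ (by exact_mod_cast (by omega : 0 < g))]
  exact_mod_cast hcount.trans hV
end

section
/- Every n-vertex cubic graph with girth at least g has a matching covering all but at most n/g vertices. -/
/-!
By the Tutte–Berge formula, it suffices to show that deleting any set `u` of vertices leaves at
most `|u| + n / g` odd components. (The formula follows from Tutte's theorem applied to `G`
joined with `k` universal vertices.) Let `C` be an odd component with `b` edges to `u`. Counting
degrees gives `2 e(C) + b = 3 |C|`, so `b` is odd. As `u` has at most `3 |u|` incident edges,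
at most `|u|` components have `b ≥ 3`. If `b = 1`, then `e(C) ≥ |C|`, so the connected graph `C`
is not a tree and contains a cycle; hence `|C| ≥ g`, and at most `n / g` components have `b = 1`.
-/

namespace SimpleGraph

variable {V W : Type*} {G : SimpleGraph V} {G' : SimpleGraph W}

local notation:max G:max " ⊖ " u:max => Subgraph.coe (Subgraph.deleteVerts (⊤ : Subgraph G) u)

lemma Iso.ncard_oddComponents_eq (φ : G ≃g G') :
    G.oddComponents.ncard = G'.oddComponents.ncard := by
  rw [← Set.ncard_image_of_injective _ φ.connectedComponentEquiv.injective]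
  congr 1
  ext c'
  obtain ⟨c, rfl⟩ := φ.connectedComponentEquiv.surjective c'
  simp only [Set.mem_image, φ.connectedComponentEquiv.injective.eq_iff, exists_eq_right,
    Set.mem_ofPred_eq, ← Nat.card_coe_set_eq,
    Nat.card_congr (ConnectedComponent.isoEquivSupp φ c)]

lemma natCard_deleteVerts_verts [Finite V] (u : Set V) :
    Nat.card ((⊤ : G.Subgraph).deleteVerts u).verts = Nat.card V - u.ncard := by
  rw [Subgraph.deleteVerts_verts, Subgraph.verts_top, Nat.card_coe_set_eq,
    Set.ncard_sdiff (Set.subset_univ u), Set.ncard_univ]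

lemma ncard_oddComponents_deleteVerts_add_ncard_mod_two [Finite V] (u : Set V) :
    ((G ⊖ u).oddComponents.ncard + u.ncard) % 2 = Nat.card V % 2 := by
  have hodd := odd_ncard_oddComponents (G := G ⊖ u)
  rw [natCard_deleteVerts_verts, Nat.odd_iff, Nat.odd_iff] at hodd
  have := Set.ncard_le_card u
  omega

lemma preconnected_of_forall_adj {w : V} (hw : ∀ v, v ≠ w → G.Adj w v) : G.Preconnected := by
  have hreach (v : V) : G.Reachable w v := by
    by_cases hv : v = w
    · exact hv ▸ Reachable.refl v
    · exact (hw v hv).reachable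
  exact fun a b ↦ (hreach a).symm.trans (hreach b)

section UniversalVerts

variable {k : ℕ}

def withUniversalVerts (G : SimpleGraph V) (k : ℕ) : SimpleGraph (V ⊕ Fin k) :=
  (G ⊕g ⊤) ⊔ completeBipartiteGraph V (Fin k)

@[simp] lemma withUniversalVerts_adj_inl_inl {v w : V} :
    (G.withUniversalVerts k).Adj (.inl v) (.inl w) ↔ G.Adj v w := by
  simp [withUniversalVerts]

@[simp] lemma withUniversalVerts_adj_inr {x : V ⊕ Fin k} {i : Fin k} :
    (G.withUniversalVerts k).Adj (.inr i) x ↔ x ≠ .inr i := by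
  cases x <;> simp [withUniversalVerts, eq_comm]

lemma ncard_oddComponents_withUniversalVerts_deleteVerts {U : Set (V ⊕ Fin k)}
    (hU : Set.range Sum.inr ⊆ U) :
    ((G.withUniversalVerts k) ⊖ U).oddComponents.ncard =
      (G ⊖ (Sum.inl ⁻¹' U)).oddComponents.ncard := by
  let f : ((⊤ : G.Subgraph).deleteVerts (Sum.inl ⁻¹' U)).verts →
      ((⊤ : (G.withUniversalVerts k).Subgraph).deleteVerts U).verts :=
    fun v ↦ ⟨.inl v, by simpa using v.2.2⟩
  have hf : Function.Bijective f := by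
    refine ⟨fun v w h ↦ Subtype.ext (Sum.inl_injective (congrArg Subtype.val h)), ?_⟩
    rintro ⟨x | i, hx⟩
    · exact ⟨⟨x, by simpa using hx.2⟩, rfl⟩
    · exact absurd (hU ⟨i, rfl⟩) hx.2
  let φ : G ⊖ (Sum.inl ⁻¹' U) ≃g (G.withUniversalVerts k) ⊖ U :=
    { toEquiv := Equiv.ofBijective f hf
      map_rel_iff' := by
        rintro ⟨v, hv⟩ ⟨w, hw⟩
        simp [f, show Sum.inl v ∉ U from hv.2, show Sum.inl w ∉ U from hw.2] }
  exact (Iso.ncard_oddComponents_eq φ).symm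

lemma not_isTutteViolator_withUniversalVerts [Finite V] (hk : Even (Nat.card V + k))
    (h : ∀ u : Set V, (G ⊖ u).oddComponents.ncard ≤ u.ncard + k) (U : Set (V ⊕ Fin k)) :
    ¬ (G.withUniversalVerts k).IsTutteViolator U := by
  rw [IsTutteViolator, not_lt]
  by_cases hU : Set.range Sum.inr ⊆ U
  · have hUeq : U = Sum.inl '' (Sum.inl ⁻¹' U) ∪ Set.range Sum.inr := by
      ext (x | i)
      · simp
      · simpa using hU ⟨i, rfl⟩
    have hcard : U.ncard = (Sum.inl ⁻¹' U).ncard + k := by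
      rw [hUeq, Set.ncard_union_eq (by simp [Set.disjoint_left]),
        Set.ncard_image_of_injective _ Sum.inl_injective,
        Set.ncard_range_of_injective Sum.inr_injective, Nat.card_fin, ← hUeq]
    rw [ncard_oddComponents_withUniversalVerts_deleteVerts hU, hcard]
    exact h _
  · -- A universal vertex survives, so at most one component is left; by parity there is none
    -- when `U = ∅`.
    obtain ⟨_, ⟨i, rfl⟩, hi⟩ := Set.not_subset.mp hU
    have hconn : ((G.withUniversalVerts k) ⊖ U).Preconnected :=
      preconnected_of_forall_adj (w := ⟨.inr i, by simpa using hi⟩) fun v hv ↦ by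
        simpa [hi, v.2.2] using fun h ↦ hv (Subtype.ext h)
    have := hconn.subsingleton_connectedComponent
    have hle := Set.ncard_le_one_of_subsingleton ((G.withUniversalVerts k) ⊖ U).oddComponents
    have hpar := ncard_oddComponents_deleteVerts_add_ncard_mod_two (G := G.withUniversalVerts k) U
    rw [Nat.card_sum, Nat.card_fin] at hpar
    rw [Nat.even_iff] at hk
    omega

lemma exists_isMatching_of_isPerfectMatching_withUniversalVerts [Finite V]
    {M : (G.withUniversalVerts k).Subgraph} (hM : M.IsPerfectMatching) :
    ∃ M' : G.Subgraph, M'.IsMatching ∧ Nat.card V ≤ M'.verts.ncard + k := by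
  let M' : G.Subgraph :=
    { verts := {v | ∃ w, M.Adj (.inl v) (.inl w)}
      Adj v w := M.Adj (.inl v) (.inl w)
      adj_sub h := by simpa using M.adj_sub h
      edge_vert h := ⟨_, h⟩
      symm := ⟨fun _ _ h ↦ h.symm⟩ }
  have hM' : M'.IsMatching := fun v ⟨w, hw⟩ ↦
    ⟨w, hw, fun w' hw' ↦ Sum.inl_injective (hM.1.eq_of_adj_left hw' hw)⟩
  choose partner hpartner using fun x ↦ (Subgraph.isPerfectMatching_iff.mp hM x).exists
  have hcompl : M'.vertsᶜ.ncard ≤ k := by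
    have := Set.ncard_le_ncard_of_injOn (s := M'.vertsᶜ) (t := Set.range Sum.inr)
      (fun v ↦ partner (.inl v)) (fun v hv ↦ ?_)
      fun v _ w _ (h : partner (.inl v) = partner (.inl w)) ↦
        Sum.inl_injective (hM.1.eq_of_adj_right (hpartner _) (h ▸ hpartner _))
    · rwa [Set.ncard_range_of_injective Sum.inr_injective, Nat.card_fin] at this
    · rcases hp : partner (.inl v) with w | i
      · exact absurd ⟨w, hp ▸ hpartner _⟩ hv
      · exact ⟨i, rfl⟩
  exact ⟨M', hM', (Set.ncard_add_ncard_compl M'.verts).symm.le.trans (by omega)⟩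

end UniversalVerts

theorem exists_isMatching_card_le_ncard_verts_add_of_even [Finite V] {k : ℕ}
    (hk : Even (Nat.card V + k))
    (h : ∀ u : Set V, (G ⊖ u).oddComponents.ncard ≤ u.ncard + k) :
    ∃ M : G.Subgraph, M.IsMatching ∧ Nat.card V ≤ M.verts.ncard + k :=
  have ⟨_, hM⟩ := tutte.mpr (not_isTutteViolator_withUniversalVerts hk h)
  exists_isMatching_of_isPerfectMatching_withUniversalVerts hM

theorem exists_isMatching_card_le_ncard_verts_add [Finite V] (k : ℕ)
    (h : ∀ u : Set V, (G ⊖ u).oddComponents.ncard ≤ u.ncard + k) :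
    ∃ M : G.Subgraph, M.IsMatching ∧ Nat.card V ≤ M.verts.ncard + k := by
  rcases Nat.even_or_odd (Nat.card V + k) with hk | hk
  · exact exists_isMatching_card_le_ncard_verts_add_of_even hk h
  -- Since `(G ⊖ u).oddComponents.ncard - u.ncard ≡ Nat.card V`, the bound `k` of the wrong
  -- parity is never attained, so `k - 1` is a bound as well.
  have hpar := ncard_oddComponents_deleteVerts_add_ncard_mod_two (G := G)
  rw [Nat.odd_iff] at hk
  have hk1 : 1 ≤ k := by
    have := h ∅
    have := hpar ∅
    rw [Set.ncard_empty] at *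
    omega
  obtain ⟨M, hM, hcard⟩ := exists_isMatching_card_le_ncard_verts_add_of_even (G := G)
    (k := k - 1) (Nat.even_iff.mpr (by omega)) fun u ↦ by have := h u; have := hpar u; omega
  exact ⟨M, hM, by omega⟩

lemma Walk.IsCycle.length_le_card [Finite V] {v : V} {p : G.Walk v v} (hp : p.IsCycle) :
    p.length ≤ Nat.card V := by
  have := Fintype.ofFinite V
  rw [Nat.card_eq_fintype_card]
  simpa [Walk.length_support] using hp.support_nodup.length_le_card

lemma egirth_le_card_of_connected_of_card_le_card_edgeSet {H : SimpleGraph W} [Finite W]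
    (hH : H.Connected) (hcard : Nat.card W ≤ Nat.card H.edgeSet) (hHG : H ⊑ G) :
    G.egirth ≤ Nat.card W := by
  have hcyc : ¬ H.IsAcyclic := fun hacyc ↦ by
    have := (isTree_iff_connected_and_card.mp ⟨hH, hacyc⟩).2
    omega
  obtain ⟨_, w, hw, hlen⟩ := exists_egirth_eq_length.mpr hcyc
  calc G.egirth ≤ H.egirth := hHG.egirth_le
    _ = w.length := hlen
    _ ≤ Nat.card W := by exact_mod_cast hw.length_le_card

lemma ncard_neighborSet_eq_degree (v : V) [Fintype (G.neighborSet v)] :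
    (G.neighborSet v).ncard = G.degree v := by
  rw [← Nat.card_coe_set_eq, Nat.card_eq_fintype_card, card_neighborSet_eq_degree]

lemma ConnectedComponent.ncard_neighborSet_toSimpleGraph (c : G.ConnectedComponent)
    (x : c.supp) : (c.toSimpleGraph.neighborSet x).ncard = (G.neighborSet x).ncard := by
  rw [← Set.ncard_image_of_injective _ Subtype.val_injective]
  congr 1
  ext y
  simp only [Set.mem_image, mem_neighborSet, toSimpleGraph, comap_adj,
    Function.Embedding.subtype_apply]
  refine ⟨fun ⟨z, hz, hzy⟩ ↦ hzy ▸ hz, fun h ↦ ⟨⟨y, ?_⟩, h, rfl⟩⟩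
  exact (mem_supp_iff _ _).mp x.2 ▸ (connectedComponentMk_eq_of_adj h).symm

lemma ConnectedComponent.sum_sum_supp [Fintype V] [Fintype G.ConnectedComponent]
    [∀ c : G.ConnectedComponent, Fintype c.supp] {M : Type*} [AddCommMonoid M] (f : V → M) :
    ∑ c : G.ConnectedComponent, ∑ x : c.supp, f x = ∑ x, f x := by
  classical
  rw [← Fintype.sum_fiberwise G.connectedComponentMk f]
  congr!

lemma ConnectedComponent.sum_ncard_supp [Fintype V] [Fintype G.ConnectedComponent]
    [∀ c : G.ConnectedComponent, Fintype c.supp] :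
    ∑ c : G.ConnectedComponent, c.supp.ncard = Nat.card V := by
  simp_rw [← Nat.card_coe_set_eq, Nat.card_eq_fintype_card, Fintype.card_eq_sum_ones]
  exact sum_sum_supp fun _ ↦ 1

lemma ncard_neighborSet_deleteVerts_add [Finite V] (u : Set V)
    (x : ((⊤ : G.Subgraph).deleteVerts u).verts) :
    ((G ⊖ u).neighborSet x).ncard + (G.neighborSet x ∩ u).ncard = (G.neighborSet x).ncard := by
  rw [← Set.ncard_image_of_injective _ Subtype.val_injective, add_comm,
    ← Set.ncard_inter_add_ncard_sdiff_eq_ncard (G.neighborSet x) u]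
  congr 2
  ext y
  simp +contextual [x.2.2]

lemma IsRegularOfDegree.sum_ncard_neighborSet_inter [Fintype V] [DecidableRel G.Adj] {d : ℕ}
    (hG : G.IsRegularOfDegree d) (u : Set V) :
    ∑ v, (G.neighborSet v ∩ u).ncard = d * u.ncard := by
  classical
  have hfilter (v : V) : G.neighborSet v ∩ u = ↑(u.toFinset.filter (G.Adj v)) := by
    ext
    simp [and_comm]
  have hdouble := Finset.sum_card_bipartiteAbove_eq_sum_card_bipartiteBelow
    (s := Finset.univ) (t := u.toFinset) (r := G.Adj)
  simp only [Finset.bipartiteAbove, Finset.bipartiteBelow] at hdouble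
  simp only [hfilter, Set.ncard_coe_finset]
  rw [hdouble, Finset.sum_congr rfl fun s _ ↦ ?_, Finset.sum_const, smul_eq_mul, mul_comm,
    Set.ncard_eq_toFinset_card']
  rw [← hG s, ← card_neighborFinset_eq_degree, neighborFinset_eq_filter]
  simp [adj_comm]

lemma IsRegularOfDegree.egirth_le_ncard_supp [Fintype V] [DecidableRel G.Adj]
    (hG : G.IsRegularOfDegree 3) {u : Set V} (c : (G ⊖ u).ConnectedComponent) [Fintype c.supp]
    (hodd : Odd c.supp.ncard) (hb : ∑ x : c.supp, (G.neighborSet x ∩ u).ncard ≤ 2) :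
    G.egirth ≤ c.supp.ncard := by
  classical
  have hdeg (x : c.supp) :
      (c.toSimpleGraph.neighborSet x).ncard + (G.neighborSet x ∩ u).ncard = 3 := by
    rw [c.ncard_neighborSet_toSimpleGraph, ncard_neighborSet_deleteVerts_add,
      ncard_neighborSet_eq_degree, hG]
  have hhandshake : ∑ x : c.supp, (c.toSimpleGraph.neighborSet x).ncard =
      2 * Nat.card c.toSimpleGraph.edgeSet := by
    simp only [ncard_neighborSet_eq_degree]
    rw [Nat.card_eq_fintype_card, ← edgeFinset_card]
    convert sum_degrees_eq_twice_card_edges (G := c.toSimpleGraph)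
  have hsum : 2 * Nat.card c.toSimpleGraph.edgeSet + ∑ x : c.supp, (G.neighborSet x ∩ u).ncard =
      3 * c.supp.ncard := by
    rw [← hhandshake, ← Finset.sum_add_distrib, Finset.sum_congr rfl fun x _ ↦ hdeg x,
      Finset.sum_const, Finset.card_univ, smul_eq_mul, mul_comm, ← Nat.card_eq_fintype_card,
      Nat.card_coe_set_eq]
  have hcopy : c.toSimpleGraph ⊑ G :=
    ⟨⟨(Subgraph.hom _).comp c.toSimpleGraph_hom,
      Subtype.val_injective.comp Subtype.val_injective⟩⟩
  rw [← Nat.card_coe_set_eq]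
  refine egirth_le_card_of_connected_of_card_le_card_edgeSet c.connected_toSimpleGraph ?_ hcopy
  obtain ⟨m, hm⟩ := hodd
  rw [Nat.card_coe_set_eq]
  omega

lemma IsRegularOfDegree.ncard_oddComponents_deleteVerts_le [Fintype V] [DecidableRel G.Adj]
    (hG : G.IsRegularOfDegree 3) {g : ℕ} (hg : 0 < g) (hgirth : (g : ℕ∞) ≤ G.egirth)
    (u : Set V) : (G ⊖ u).oddComponents.ncard ≤ u.ncard + Nat.card V / g := by
  classical
  let b (c : (G ⊖ u).ConnectedComponent) : ℕ := ∑ x : c.supp, (G.neighborSet x ∩ u).ncard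
  let O := Finset.univ.filter fun c : (G ⊖ u).ConnectedComponent ↦ Odd c.supp.ncard
  let P := O.filter fun c ↦ b c ≤ 2
  let Q := O.filter fun c ↦ ¬ b c ≤ 2
  have hO : (G ⊖ u).oddComponents.ncard = P.card + Q.card := by
    rw [Finset.card_filter_add_card_filter_not, ← Set.ncard_coe_finset]
    congr
    ext
    simp [O]
  have hP : g * P.card ≤ Nat.card V := calc
    g * P.card = P.card • g := mul_comm _ _
    _ ≤ ∑ c ∈ P, c.supp.ncard := by
        refine Finset.card_nsmul_le_sum _ _ _ fun c hc ↦ ?_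
        simp only [Finset.mem_filter, P, O, Finset.mem_univ, true_and] at hc
        exact_mod_cast hgirth.trans (hG.egirth_le_ncard_supp c hc.1 hc.2)
    _ ≤ ∑ c : (G ⊖ u).ConnectedComponent, c.supp.ncard :=
        Finset.sum_le_univ_sum_of_nonneg fun _ ↦ Nat.zero_le _
    _ = Nat.card ((⊤ : G.Subgraph).deleteVerts u).verts := ConnectedComponent.sum_ncard_supp
    _ ≤ Nat.card V := Finite.card_subtype_le _
  have hQ : 3 * Q.card ≤ 3 * u.ncard := calc
    3 * Q.card = Q.card • 3 := mul_comm _ _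
    _ ≤ ∑ c ∈ Q, b c := Finset.card_nsmul_le_sum _ _ _ fun c hc ↦ by
        simp only [Finset.mem_filter, Q] at hc
        omega
    _ ≤ ∑ c, b c := Finset.sum_le_univ_sum_of_nonneg fun _ ↦ Nat.zero_le _
    _ = ∑ x : ((⊤ : G.Subgraph).deleteVerts u).verts, (G.neighborSet x ∩ u).ncard :=
        ConnectedComponent.sum_sum_supp (G := G ⊖ u) fun x ↦ (G.neighborSet x ∩ u).ncard
    _ ≤ ∑ v, (G.neighborSet v ∩ u).ncard := by
        rw [← Finset.sum_subtype _ (fun _ ↦ Set.mem_toFinset)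
          fun v ↦ (G.neighborSet v ∩ u).ncard]
        exact Finset.sum_le_univ_sum_of_nonneg fun _ ↦ Nat.zero_le _
    _ = 3 * u.ncard := hG.sum_ncard_neighborSet_inter u
  have := (Nat.le_div_iff_mul_le hg).mpr ((mul_comm _ _).trans_le hP)
  omega

end SimpleGraph

/-- Every `n`-vertex cubic graph with girth at least `g` has a matching covering all but at
most `n/g` vertices. -/
theorem stmt2 (V : Type) [Fintype V] (G : SimpleGraph V) [DecidableRel G.Adj]
    (g : ℕ) (hg : 3 ≤ g) (hcubic : ∀ v : V, G.degree v = 3)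
    (hgirth : (g : ℕ∞) ≤ G.egirth) :
    ∃ M : SimpleGraph.Subgraph G, M.IsMatching ∧
      (Fintype.card V : ℝ) - M.verts.ncard ≤ (Fintype.card V : ℝ) / g := by
  obtain ⟨M, hM, hcard⟩ := G.exists_isMatching_card_le_ncard_verts_add (Nat.card V / g)
    (SimpleGraph.IsRegularOfDegree.ncard_oddComponents_deleteVerts_le hcubic (by omega) hgirth)
  refine ⟨M, hM, ?_⟩
  rw [Nat.card_eq_fintype_card] at hcard
  have hdiv : ((Fintype.card V / g : ℕ) : ℝ) ≤ Fintype.card V / g := Nat.cast_div_le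
  have hcard' : (Fintype.card V : ℝ) ≤ M.verts.ncard + (Fintype.card V / g : ℕ) := by
    exact_mod_cast hcard
  linarith
end

section
/- Every bridgeless cubic graph has a 2-factor, i.e., a spanning subgraph in which every vertex has degree exactly 2. -/
/-!
By Tutte's theorem it suffices to show that deleting a vertex set `S` leaves at most `|S|` odd
components. In a `k`-regular graph the number of darts leaving a vertex set `C` has the parity of
`k * |C|`, since the darts with both ends in `C` pair up. So if `k` is odd, every odd component
of `G - S` sends an odd number of edges into `S`; a single such edge would be a bridge, hence
there are at least three. Counting these edges at `S` gives `3 * #(odd components) ≤ k * |S|`,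
which for `k = 3` is Tutte's condition. The complement of the resulting perfect matching is a
2-factor.
-/

open Finset

namespace SimpleGraph

variable {V : Type*} {G : SimpleGraph V}

section Cut

variable [Fintype V] [DecidableRel G.Adj] (G)

def cutDarts (s : Set V) [DecidablePred (· ∈ s)] : Finset G.Dart :=
  {d | d.fst ∈ s ∧ d.snd ∉ s}

variable {G} {s : Set V} [DecidablePred (· ∈ s)]

lemma mem_cutDarts {d : G.Dart} : d ∈ G.cutDarts s ↔ d.fst ∈ s ∧ d.snd ∉ s := by
  simp [cutDarts]

lemma even_card_darts_within : Even #{d : G.Dart | d.fst ∈ s ∧ d.snd ∈ s} := by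
  rw [← ZMod.natCast_eq_zero_iff_even, card_eq_sum_ones, Nat.cast_sum, Nat.cast_one]
  refine sum_involution (fun d _ => d.symm) (fun _ _ => by decide) (fun d _ _ => d.symm_ne)
    (fun d hd => ?_) (fun d _ => d.symm_symm)
  simp only [mem_filter, mem_univ, true_and, Dart.symm_toProd] at hd ⊢
  exact hd.symm

lemma card_darts_fst_mem {k : ℕ} (hG : G.IsRegularOfDegree k) :
    #{d : G.Dart | d.fst ∈ s} = k * s.ncard := by
  classical
  have hfib := card_eq_sum_card_fiberwise (f := fun d : G.Dart => d.fst) (t := s.toFinset)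
    (s := {d : G.Dart | d.fst ∈ s}) (by
      intro d hd
      simp only [coe_filter, mem_univ, true_and, Set.mem_ofPred_eq, Set.coe_toFinset] at hd ⊢
      exact hd)
  rw [hfib, Set.ncard_eq_toFinset_card', mul_comm, ← smul_eq_mul, ← sum_const]
  refine sum_congr rfl fun v hv => ?_
  rw [filter_filter, ← hG v, ← dart_fst_fiber_card_eq_degree]
  congr 1
  ext d
  simp only [mem_filter, mem_univ, true_and, and_iff_right_iff_imp]
  rintro rfl
  simpa using hv

lemma card_darts_snd_mem : #{d : G.Dart | d.snd ∈ s} = #{d : G.Dart | d.fst ∈ s} :=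
  card_nbij' Dart.symm Dart.symm (fun _ => by simp) (fun _ => by simp) (fun d _ => d.symm_symm)
    (fun d _ => d.symm_symm)

lemma odd_card_cutDarts {k : ℕ} (hG : G.IsRegularOfDegree k) (hk : Odd k)
    (hs : Odd s.ncard) : Odd #(G.cutDarts s) := by
  have hsplit := card_filter_add_card_filter_not (s := ({d : G.Dart | d.fst ∈ s} : Finset _))
    (fun d => d.snd ∈ s)
  rw [filter_filter, filter_filter, card_darts_fst_mem hG] at hsplit
  exact (Nat.odd_add'.mp (hsplit ▸ hk.mul hs)).mpr even_card_darts_within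

lemma isBridge_of_cutDarts_eq_singleton {d : G.Dart} (h : G.cutDarts s = {d}) :
    G.IsBridge d.edge := by
  have hd := mem_cutDarts.mp (h ▸ mem_singleton_self d)
  rw [show d.edge = s(d.fst, d.snd) from rfl, isBridge_iff_forall_walk_mem_edges]
  intro p
  obtain ⟨d', hd', hfst, hsnd⟩ := p.exists_boundary_dart s hd.1 hd.2
  obtain rfl : d' = d := by rw [← mem_singleton, ← h, mem_cutDarts]; exact ⟨hfst, hsnd⟩
  exact List.mem_map_of_mem hd'

lemma three_le_card_cutDarts {k : ℕ} (hG : G.IsRegularOfDegree k) (hk : Odd k)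
    (hbridgeless : ∀ e ∈ G.edgeSet, ¬ G.IsBridge e) (hs : Odd s.ncard) :
    3 ≤ #(G.cutDarts s) := by
  have hne : #(G.cutDarts s) ≠ 1 := fun h => by
    obtain ⟨d, hd⟩ := card_eq_one.mp h
    exact hbridgeless _ d.edge_mem (isBridge_of_cutDarts_eq_singleton hd)
  obtain ⟨m, hm⟩ := odd_card_cutDarts hG hk hs
  omega

lemma sum_card_cutDarts_le {ι : Type*} (T : Finset ι) (s : ι → Set V)
    [∀ i, DecidablePred (· ∈ s i)] (S : Set V) [DecidablePred (· ∈ S)]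
    (hdisj : (T : Set ι).PairwiseDisjoint s)
    (hS : ∀ i ∈ T, ∀ d ∈ G.cutDarts (s i), d.snd ∈ S) :
    ∑ i ∈ T, #(G.cutDarts (s i)) ≤ #{d : G.Dart | d.fst ∈ S} := by
  classical
  rw [← card_biUnion, ← card_darts_snd_mem]
  · refine card_le_card fun d hd => ?_
    obtain ⟨i, hi, hd⟩ := mem_biUnion.mp hd
    simpa using hS i hi d hd
  · intro i hi j hj hij
    refine Finset.disjoint_left.mpr fun d hdi hdj => ?_
    exact (hdisj hi hj hij).ne_of_mem (mem_cutDarts.mp hdi).1 (mem_cutDarts.mp hdj).1 rfl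

end Cut

section Components

variable [Fintype V] [DecidableRel G.Adj] {S : Set V}

lemma snd_mem_of_mem_cutDarts_connectedComponent
    (c : ((⊤ : G.Subgraph).deleteVerts S).coe.ConnectedComponent)
    [DecidablePred (· ∈ Subtype.val '' c.supp)] {d : G.Dart}
    (hd : d ∈ G.cutDarts (Subtype.val '' c.supp)) : d.snd ∈ S := by
  obtain ⟨hfst, hsnd⟩ := mem_cutDarts.mp hd
  by_contra hS
  have hfstS : d.fst ∉ S := by
    obtain ⟨⟨_, -, h⟩, -, rfl⟩ := hfst
    exact h
  refine hsnd (ConnectedComponent.mem_coe_supp_of_adj hfst ⟨trivial, hS⟩ ?_)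
  exact Subgraph.deleteVerts_adj.mpr ⟨trivial, hfstS, trivial, hS, d.adj⟩

theorem three_mul_ncard_oddComponents_le {k : ℕ} (hG : G.IsRegularOfDegree k) (hk : Odd k)
    (hbridgeless : ∀ e ∈ G.edgeSet, ¬ G.IsBridge e) (S : Set V) :
    3 * ((⊤ : G.Subgraph).deleteVerts S).coe.oddComponents.ncard ≤ k * S.ncard := by
  classical
  set H := (⊤ : G.Subgraph).deleteVerts S
  set O := H.coe.oddComponents
  let vertsOf : H.coe.ConnectedComponent → Set V := fun c => Subtype.val '' c.supp
  have hcut : ∀ c ∈ O.toFinite.toFinset, 3 ≤ #(G.cutDarts (vertsOf c)) := by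
    intro c hc
    refine three_le_card_cutDarts hG hk hbridgeless ?_
    rw [Set.ncard_image_of_injective _ Subtype.val_injective]
    simpa [O] using hc
  calc 3 * O.ncard = ∑ _c ∈ O.toFinite.toFinset, 3 := by
        rw [Set.ncard_eq_toFinset_card O, sum_const, smul_eq_mul, mul_comm]
    _ ≤ ∑ c ∈ O.toFinite.toFinset, #(G.cutDarts (vertsOf c)) := sum_le_sum hcut
    _ ≤ #{d : G.Dart | d.fst ∈ S} := by
        refine sum_card_cutDarts_le _ vertsOf S ?_ fun c _ d hd =>
          snd_mem_of_mem_cutDarts_connectedComponent c hd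
        intro c _ c' _ hcc'
        exact (Set.disjoint_image_iff Subtype.val_injective).mpr
          (pairwise_disjoint_supp_connectedComponent _ hcc')
    _ = k * S.ncard := card_darts_fst_mem (s := S) hG

end Components

lemma IsRegularOfDegree.exists_isSpanning_of_isPerfectMatching [G.LocallyFinite] {k : ℕ}
    (hG : G.IsRegularOfDegree k) {M : G.Subgraph} (hM : M.IsPerfectMatching) :
    ∃ H : G.Subgraph, H.IsSpanning ∧ ∀ v, (H.neighborSet v).ncard = k - 1 := by
  let H := G.toSubgraph (G \ M.spanningCoe) sdiff_le
  refine ⟨H, toSubgraph.isSpanning _ _, fun v => ?_⟩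
  obtain ⟨w, hw, -⟩ := Subgraph.isPerfectMatching_iff.mp hM v
  have hnbr : H.neighborSet v = G.neighborSet v \ {w} := by
    ext u
    simp only [H, Subgraph.mem_neighborSet, toSubgraph_adj, sdiff_adj, Subgraph.spanningCoe_adj,
      Set.mem_sdiff, mem_neighborSet, Set.mem_singleton_iff]
    exact and_congr_right fun _ =>
      ⟨fun h hu => h (hu ▸ hw), fun h hu => h (hM.1.eq_of_adj_left hu hw)⟩
  rw [hnbr, Set.ncard_sdiff_singleton_of_mem (show w ∈ G.neighborSet v from M.adj_sub hw),
    ← hG v, ← card_neighborSet_eq_degree, Set.ncard_eq_toFinset_card', Set.toFinset_card]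

end SimpleGraph

/-- Petersen: every bridgeless cubic graph has a 2-factor, i.e. a spanning subgraph in which
every vertex has degree exactly 2. -/
theorem stmt6 (V : Type) [Fintype V] (G : SimpleGraph V) [DecidableRel G.Adj]
    (hcubic : ∀ v : V, G.degree v = 3)
    (hbridgeless : ∀ e ∈ G.edgeSet, ¬ G.IsBridge e) :
    ∃ H : SimpleGraph.Subgraph G, H.IsSpanning ∧ ∀ v : V, (H.neighborSet v).ncard = 2 := by
  have hcubic : G.IsRegularOfDegree 3 := hcubic
  obtain ⟨M, hM⟩ := SimpleGraph.tutte.mpr fun S hS =>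
    (Nat.mul_lt_mul_of_pos_left hS (by decide)).not_ge
      (SimpleGraph.three_mul_ncard_oddComponents_le hcubic (by decide) hbridgeless S)
  exact hcubic.exists_isSpanning_of_isPerfectMatching hM
end

section
/- In a cubic graph G with girth at least g, after deleting the vertices uncovered by a maximum matching M and all edges of M, every cycle in the resulting graph of maximum degree ≤ 2 has length at least g, and every maximal path has length determined by two deleted endpoints, so the number of resulting paths is at most 3·(number of uncovered vertices)/2 plus the trivial bound; in particular if M covers all but at most n/g vertices, the resulting decomposition has at most 3n/(2g) paths and all cycles have length at least g. -/
/-!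
A cycle of `H` is a cycle of `G`, hence has length at least `g`. A covered vertex has exactly one
`M`-neighbour, so its degree in `H` is `2` minus its number of uncovered neighbours. A component
of `H` without cycles is a tree, with degree sum `2|C| - 2`, while every other component has
degree sum at most `2|C|`; summing over components, twice the number of acyclic components is
at most the number of edges between covered and uncovered vertices, which is at most
`3 (n - |V(M)|) ≤ 3n/g`.
-/

open Finset

namespace SimpleGraph

variable {V : Type*} {G : SimpleGraph V}

def ConnectedComponent.IsAcyclic (C : G.ConnectedComponent) : Prop :=
  ∀ v, G.connectedComponentMk v = C → ∀ w : G.Walk v v, ¬ w.IsCycle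

theorem ConnectedComponent.IsAcyclic.isTree_toSimpleGraph {C : G.ConnectedComponent}
    (hC : C.IsAcyclic) : C.toSimpleGraph.IsTree where
  connected := C.connected_toSimpleGraph
  isAcyclic v _ hw := hC v v.2 _ (hw.map (f := C.toSimpleGraph_hom) Subtype.val_injective)

namespace Subgraph

variable {M : G.Subgraph}

def residual (M : G.Subgraph) : SimpleGraph M.verts :=
  (G.induce M.verts).deleteEdges {e | e.map Subtype.val ∈ M.edgeSet}

theorem residual_adj {a b : M.verts} : M.residual.Adj a b ↔ G.Adj a b ∧ ¬ M.Adj a b := by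
  simp [residual]

theorem residual_isContained (M : G.Subgraph) : M.residual ⊑ G :=
  (IsContained.of_le fun _ _ h => (residual_adj.mp h).1).trans ⟨(Embedding.induce _).toCopy⟩

end Subgraph

variable [Fintype V] [DecidableRel G.Adj]

theorem ConnectedComponent.degree_toSimpleGraph (C : G.ConnectedComponent) (v : C)
    [Fintype (C.toSimpleGraph.neighborSet v)] :
    C.toSimpleGraph.degree v = G.degree v := by
  classical
  unfold toSimpleGraph at *
  convert degree_induce_of_neighborSet_subset fun _ hw => C.mem_supp_of_adj_mem_supp v.2 hw
  rfl

open scoped Classical in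
theorem ConnectedComponent.IsAcyclic.sum_degree_add_two {C : G.ConnectedComponent}
    (hC : C.IsAcyclic) :
    ∑ v with G.connectedComponentMk v = C, G.degree v + 2 =
      2 * #{v | G.connectedComponentMk v = C} := by
  have htree := hC.isTree_toSimpleGraph
  have hpos : 0 < Fintype.card C := Fintype.card_pos_iff.mpr htree.connected.nonempty
  have hsum : ∑ v with G.connectedComponentMk v = C, G.degree v =
      ∑ v : C, C.toSimpleGraph.degree v := by
    rw [sum_subtype (p := (· ∈ C)) _ fun v =>
      (mem_filter_univ v).trans (C.mem_supp_iff v).symm]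
    · simp only [C.degree_toSimpleGraph]
    · infer_instance
  rw [hsum, sum_degrees_eq_twice_card_edges, ← Fintype.card_subtype]
  change _ = 2 * Fintype.card C
  have := htree.card_edgeFinset
  omega

open scoped Classical in
theorem sum_degree_add_two_mul_ncard_isAcyclic_le (hG : ∀ v, G.degree v ≤ 2) :
    ∑ v, G.degree v + 2 * {C : G.ConnectedComponent | C.IsAcyclic}.ncard ≤
      2 * Fintype.card V := by
  have hdegree : ∑ v, G.degree v = ∑ C, ∑ v with G.connectedComponentMk v = C, G.degree v :=
    (sum_fiberwise _ _ _).symm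
  have hacyclic : 2 * {C : G.ConnectedComponent | C.IsAcyclic}.ncard =
      ∑ C : G.ConnectedComponent, if C.IsAcyclic then 2 else 0 := by
    rw [Set.ncard_eq_toFinset_card', Set.toFinset_ofPred, card_filter, mul_sum]
    simp [mul_ite]
  have hcard : Fintype.card V = ∑ C, #{v | G.connectedComponentMk v = C} :=
    card_eq_sum_card_fiberwise fun v _ => mem_univ _
  have hcomponent (C : G.ConnectedComponent) :
      ∑ v with G.connectedComponentMk v = C, G.degree v + (if C.IsAcyclic then 2 else 0) ≤
        2 * #{v | G.connectedComponentMk v = C} := by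
    split_ifs with hC
    · exact hC.sum_degree_add_two.le
    · rw [add_zero, mul_comm]
      exact sum_le_card_nsmul _ _ 2 fun v _ => hG v
  rw [hdegree, hacyclic, ← sum_add_distrib, hcard, mul_sum]
  exact sum_le_sum fun C _ => hcomponent C

theorem sum_card_filter_adj_le {d : ℕ} (hG : ∀ v, G.degree v ≤ d) (s t : Finset V) :
    ∑ v ∈ s, #{u ∈ t | G.Adj v u} ≤ d * #t := by
  change ∑ v ∈ s, #(t.bipartiteAbove G.Adj v) ≤ _
  rw [sum_card_bipartiteAbove_eq_sum_card_bipartiteBelow, mul_comm, ← smul_eq_mul]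
  refine sum_le_card_nsmul _ _ _ fun u _ => ?_
  calc #(s.bipartiteBelow G.Adj u) ≤ #(G.neighborFinset u) :=
        card_le_card fun v hv => by
          simpa [bipartiteBelow, adj_comm] using (mem_filter.mp hv).2
    _ ≤ d := (card_neighborFinset_eq_degree G u).symm ▸ hG u

namespace Subgraph

variable {M : G.Subgraph}

open scoped Classical in
theorem IsMatching.degree_residual_add_one (hM : M.IsMatching) (v : M.verts) :
    M.residual.degree v + 1 = #{u ∈ G.neighborFinset v | u ∈ M.verts} := by
  obtain ⟨w, hvw, hw⟩ := hM v.2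
  have hcovered : {u ∈ G.neighborFinset v | u ∈ M.verts} =
      insert w ((M.residual.neighborFinset v).map (.subtype _)) := by
    ext u
    simp only [mem_filter, mem_neighborFinset, mem_insert, mem_map,
      Function.Embedding.subtype_apply, residual_adj]
    constructor
    · rintro ⟨hvu, hu⟩
      by_cases hMvu : M.Adj v u
      · exact .inl (hw u hMvu)
      · exact .inr ⟨⟨u, hu⟩, ⟨hvu, hMvu⟩, rfl⟩
    · rintro (rfl | ⟨u, ⟨hvu, -⟩, rfl⟩)
      exacts [⟨hvw.adj_sub, hvw.snd_mem⟩, ⟨hvu, u.2⟩]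
  rw [hcovered, card_insert_of_notMem, card_map, card_neighborFinset_eq_degree]
  simp [residual_adj, hvw]

theorem IsMatching.two_mul_ncard_isAcyclic_residual_le (hG : G.IsRegularOfDegree 3)
    (hM : M.IsMatching) :
    2 * {C : M.residual.ConnectedComponent | C.IsAcyclic}.ncard ≤ 3 * M.vertsᶜ.ncard := by
  classical
  let uncovered (v : M.verts) := #{u ∈ G.neighborFinset v | u ∉ M.verts}
  have hsplit (v : M.verts) : M.residual.degree v + uncovered v = 2 := by
    have hresidual := hM.degree_residual_add_one v
    have hall := card_filter_add_card_filter_not (s := G.neighborFinset v) (· ∈ M.verts)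
    rw [card_neighborFinset_eq_degree, hG v] at hall
    simp only [uncovered]
    omega
  have hpaths := sum_degree_add_two_mul_ncard_isAcyclic_le fun v => (hsplit v).le.trans' le_self_add
  have hsum : ∑ v, M.residual.degree v + ∑ v, uncovered v = 2 * Fintype.card M.verts := by
    rw [← sum_add_distrib, sum_congr rfl fun v _ => hsplit v, sum_const, card_univ, smul_eq_mul,
      mul_comm]
  have hcross : ∑ v, uncovered v ≤ 3 * #{u | u ∉ M.verts} := by
    calc ∑ v, uncovered v
        = ∑ v ∈ M.verts.toFinset, #{u ∈ {u | u ∉ M.verts} | G.Adj v u} := by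
          rw [sum_subtype M.verts.toFinset (p := (· ∈ M.verts)) fun _ => Set.mem_toFinset]
          refine sum_congr rfl fun v _ => ?_
          simp only [uncovered, filter_filter]
          congr 1
          ext u
          simp [and_comm]
      _ ≤ 3 * #{u | u ∉ M.verts} := sum_card_filter_adj_le (fun v => (hG v).le) _ _
  have hcompl : M.vertsᶜ.ncard = #{u | u ∉ M.verts} := by
    rw [Set.ncard_eq_toFinset_card', Set.toFinset_compl]
    congr 1
    ext
    simp
  omega

end Subgraph

end SimpleGraph

theorem stmt8_general (V : Type) [Fintype V] (G : SimpleGraph V) [DecidableRel G.Adj]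
    (g : ℕ) (hcubic : ∀ v : V, G.degree v = 3)
    (hgirth : (g : ℕ∞) ≤ G.egirth)
    (M : SimpleGraph.Subgraph G) (hM : M.IsMatching)
    (hcover : (Fintype.card V : ℝ) - M.verts.ncard ≤ (Fintype.card V : ℝ) / g)
    (H : SimpleGraph M.verts)
    (hH : H = (G.induce M.verts).deleteEdges
        {e : Sym2 M.verts | e.map Subtype.val ∈ M.edgeSet}) :
    (∀ (v : M.verts) (w : H.Walk v v), w.IsCycle → g ≤ w.length) ∧
    ({C : H.ConnectedComponent |
        ∀ (v : M.verts), H.connectedComponentMk v = C →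
          ∀ w : H.Walk v v, ¬ w.IsCycle}.ncard : ℝ)
      ≤ 3 * (Fintype.card V : ℝ) / (2 * g) := by
  obtain rfl : H = M.residual := hH
  refine ⟨fun v w hw => ?_, ?_⟩
  · exact_mod_cast SimpleGraph.le_egirth.mp (hgirth.trans M.residual_isContained.egirth_le) v w hw
  have hcount := (Nat.cast_le (α := ℝ)).mpr (hM.two_mul_ncard_isAcyclic_residual_le hcubic)
  have hcompl := Set.ncard_add_ncard_compl M.verts
  rw [Nat.card_eq_fintype_card] at hcompl
  have huncovered : (M.vertsᶜ.ncard : ℝ) = Fintype.card V - M.verts.ncard := by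
    rw [← hcompl]
    push_cast
    ring
  push_cast at hcount
  calc ({C : M.residual.ConnectedComponent | C.IsAcyclic}.ncard : ℝ)
      ≤ 3 / 2 * (Fintype.card V / g) := by linarith
    _ = 3 * Fintype.card V / (2 * g) := by ring

/-- In a cubic graph `G` of girth at least `g`, if `M` is a matching covering all but at most
`n/g` vertices and `H` is obtained by deleting the uncovered vertices and the edges of `M`,
then every cycle of `H` has length at least `g` and the number of components of `H` that are
paths (i.e. contain no cycle) is at most `3n/(2g)`. -/
theorem stmt8 (V : Type) [Fintype V] (G : SimpleGraph V) [DecidableRel G.Adj]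
    (g : ℕ) (hg : 3 ≤ g) (hcubic : ∀ v : V, G.degree v = 3)
    (hgirth : (g : ℕ∞) ≤ G.egirth)
    (M : SimpleGraph.Subgraph G) (hM : M.IsMatching)
    (hcover : (Fintype.card V : ℝ) - M.verts.ncard ≤ (Fintype.card V : ℝ) / g)
    (H : SimpleGraph M.verts)
    (hH : H = (G.induce M.verts).deleteEdges
        {e : Sym2 M.verts | e.map Subtype.val ∈ M.edgeSet}) :
    (∀ (v : M.verts) (w : H.Walk v v), w.IsCycle → g ≤ w.length) ∧
    ({C : H.ConnectedComponent |
        ∀ (v : M.verts), H.connectedComponentMk v = C →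
          ∀ w : H.Walk v v, ¬ w.IsCycle}.ncard : ℝ)
      ≤ 3 * (Fintype.card V : ℝ) / (2 * g) :=
  stmt8_general V G g hcubic hgirth M hM hcover H hH
end
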